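/- The minimum of |z| over all complex roots z of the polynomial q⁴ + q³ + 4q² + q + 1 equals R_{√2} = (1 + √2 − √(2√2 − 1))/2; that is, this polynomial has a root of modulus R_{√2} and every root has modulus at least R_{√2}. -/

import Mathlib

/-! The quartic is palindromic, so its roots are the solutions of `z + z⁻¹ = w` with
`w² + w + 2 = 0`, i.e. `w = (-1 ± i√7)/2`. The Joukowski map `z ↦ z + z⁻¹` sends the circle
`‖z‖ = r` onto an ellipse with semi-axes `r + r⁻¹` and `|r - r⁻¹|`; asking that ellipse to pass
through `w` forces `r + r⁻¹ = 1 + √2`, whose solutions are `R_{√2}` and `R_{√2}⁻¹ ≥ R_{√2}`. Since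
the roots are closed under `z ↦ z⁻¹`, some root has modulus at most one, hence exactly `R_{√2}`. -/

/-- `R_{√2} = (1 + √2 − √(2√2 − 1))/2`. -/
noncomputable def Rsqrt2 : ℝ := (1 + Real.sqrt 2 - Real.sqrt (2 * Real.sqrt 2 - 1)) / 2

open Complex Real

theorem eq_or_mul_eq_one_of_sq_sub_mul_add_one {R : Type*} [CommRing R] [NoZeroDivisors R]
    {x y b : R} (hx : x ^ 2 - b * x + 1 = 0) (hy : y ^ 2 - b * y + 1 = 0) :
    x = y ∨ x * y = 1 := by
  have : (x - y) * (x + y - b) = 0 := by linear_combination hx - hy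
  rcases mul_eq_zero.1 this with h | h
  · exact Or.inl (sub_eq_zero.1 h)
  · exact Or.inr (by linear_combination -hx + x * h)

theorem palindromic_quartic_eq {K : Type*} [Field K] {z : K} (hz : z ≠ 0) (a b : K) :
    z ^ 4 + a * z ^ 3 + b * z ^ 2 + a * z + 1 =
      z ^ 2 * ((z + z⁻¹) ^ 2 + a * (z + z⁻¹) + (b - 2)) := by
  field_simp
  ring

theorem palindromic_quartic_inv_eq_zero {K : Type*} [Field K] {z a b : K}
    (h : z ^ 4 + a * z ^ 3 + b * z ^ 2 + a * z + 1 = 0) :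
    z⁻¹ ^ 4 + a * z⁻¹ ^ 3 + b * z⁻¹ ^ 2 + a * z⁻¹ + 1 = 0 := by
  have hz : z ≠ 0 := by rintro rfl; simp at h
  rw [palindromic_quartic_eq hz] at h
  rw [palindromic_quartic_eq (inv_ne_zero hz), inv_inv, add_comm z⁻¹,
    (mul_eq_zero.1 h).resolve_left (pow_ne_zero 2 hz), mul_zero]

/-- The Joukowski image `z + z⁻¹` of the circle of radius `r` lies on the ellipse
`x² / (r + r⁻¹)² + y² / (r - r⁻¹)² = 1`, written here with `t = r²` and cleared denominators. -/
theorem Complex.normSq_mul_joukowski_eq {z : ℂ} (hz : z ≠ 0) :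
    normSq z * ((z + z⁻¹).re ^ 2 * (normSq z - 1) ^ 2 + (z + z⁻¹).im ^ 2 * (normSq z + 1) ^ 2) =
      (normSq z ^ 2 - 1) ^ 2 := by
  have ht : z.re ^ 2 + z.im ^ 2 ≠ 0 := by
    rw [sq, sq, ← normSq_apply]
    exact (normSq_pos.2 hz).ne'
  simp only [add_re, add_im, inv_re, inv_im, normSq_apply, ← sq]
  field_simp
  ring

theorem re_im_of_sq_add_self_add_two_eq_zero {w : ℂ} (hw : w ^ 2 + w + 2 = 0) :
    w.re = -1 / 2 ∧ w.im ^ 2 = 7 / 4 := by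
  have hre : w.re ^ 2 - w.im ^ 2 + w.re + 2 = 0 := by
    simpa [sq] using congrArg re hw
  have him : w.im * (2 * w.re + 1) = 0 := by
    have h := congrArg im hw
    simp only [sq, add_im, mul_im, im_ofNat, zero_im] at h
    linear_combination h
  have him0 : w.im ≠ 0 := by
    intro h0
    nlinarith [sq_nonneg (w.re + 1 / 2)]
  have hre' : w.re = -1 / 2 := by
    linarith [(mul_eq_zero.1 him).resolve_left him0]
  exact ⟨hre', by rw [hre'] at hre; linarith⟩

theorem sq_sub_mul_add_one_eq_zero_of_octic_eq_zero {r : ℝ} (hr : 0 ≤ r)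
    (h : r ^ 8 - 2 * r ^ 6 - 5 * r ^ 4 - 2 * r ^ 2 + 1 = 0) :
    r ^ 2 - (1 + √2) * r + 1 = 0 := by
  have hs2 : √2 ^ 2 = 2 := sq_sqrt (by norm_num)
  have hs1 := one_lt_sqrt_two
  have hfac : (r ^ 2 - (1 + √2) * r + 1) *
      ((r ^ 2 + (1 + √2) * r + 1) * (r ^ 4 + (2 * √2 - 1) * r ^ 2 + 1)) = 0 := by
    linear_combination h + (-4 * r ^ 4 - r ^ 2 * (r ^ 4 + (2 * √2 - 1) * r ^ 2 + 1)) * hs2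
  have hc : 0 < 2 * √2 - 1 := by linarith
  exact (mul_eq_zero.1 hfac).resolve_right (by positivity)

theorem exists_palindromic_quartic_root_norm_le_one (a b : ℂ) :
    ∃ z : ℂ, z ^ 4 + a * z ^ 3 + b * z ^ 2 + a * z + 1 = 0 ∧ ‖z‖ ≤ 1 := by
  open Polynomial in
  obtain ⟨z, hz⟩ := Complex.exists_root (f := X ^ 4 + C a * X ^ 3 + C b * X ^ 2 + C a * X + 1)
    (by rw [show degree _ = 4 by compute_degree!]; decide)
  simp only [IsRoot, eval_add, eval_pow, eval_mul, eval_C, eval_X, eval_one] at hz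
  rcases le_or_gt ‖z‖ 1 with h | h
  · exact ⟨z, hz, h⟩
  · refine ⟨z⁻¹, palindromic_quartic_inv_eq_zero hz, ?_⟩
    rw [norm_inv]
    exact inv_le_one_of_one_le₀ h.le

theorem norm_sq_sub_mul_add_one_eq_zero_of_quartic_eq_zero {z : ℂ}
    (hz : z ^ 4 + z ^ 3 + 4 * z ^ 2 + z + 1 = 0) : ‖z‖ ^ 2 - (1 + √2) * ‖z‖ + 1 = 0 := by
  have hz0 : z ≠ 0 := by rintro rfl; norm_num at hz
  have hw : (z + z⁻¹) ^ 2 + (z + z⁻¹) + 2 = 0 := by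
    refine (mul_eq_zero.1 ?_).resolve_left (pow_ne_zero 2 hz0)
    linear_combination hz - palindromic_quartic_eq hz0 1 4
  obtain ⟨hre, him⟩ := re_im_of_sq_add_self_add_two_eq_zero hw
  have hJ := normSq_mul_joukowski_eq hz0
  rw [hre, him, normSq_eq_norm_sq] at hJ
  exact sq_sub_mul_add_one_eq_zero_of_octic_eq_zero (norm_nonneg z) (by linear_combination -hJ)

theorem Rsqrt2_sq_sub_mul_add_one_eq_zero : Rsqrt2 ^ 2 - (1 + √2) * Rsqrt2 + 1 = 0 := by
  have hs2 : √2 ^ 2 = 2 := sq_sqrt (by norm_num)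
  have hk2 : √(2 * √2 - 1) ^ 2 = 2 * √2 - 1 := sq_sqrt (by linarith [one_lt_sqrt_two])
  rw [Rsqrt2]
  linear_combination (1 / 4) * hk2 - (1 / 4) * hs2

theorem Rsqrt2_le_one : Rsqrt2 ≤ 1 := by
  have hs2 : √2 ^ 2 = 2 := sq_sqrt (by norm_num)
  have hs1 := one_lt_sqrt_two
  have hk : √2 - 1 ≤ √(2 * √2 - 1) := by
    rw [le_sqrt (by linarith) (by linarith)]
    nlinarith
  rw [Rsqrt2]
  linarith

theorem min_root_modulus_eq_Rsqrt2 :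
    (∃ z : ℂ, z ^ 4 + z ^ 3 + 4 * z ^ 2 + z + 1 = 0 ∧ ‖z‖ = Rsqrt2) ∧
    ∀ z : ℂ, z ^ 4 + z ^ 3 + 4 * z ^ 2 + z + 1 = 0 → Rsqrt2 ≤ ‖z‖ := by
  have hR := Rsqrt2_le_one
  have hroot {z : ℂ} (hz : z ^ 4 + z ^ 3 + 4 * z ^ 2 + z + 1 = 0) :
      ‖z‖ = Rsqrt2 ∨ ‖z‖ * Rsqrt2 = 1 :=
    eq_or_mul_eq_one_of_sq_sub_mul_add_one
      (norm_sq_sub_mul_add_one_eq_zero_of_quartic_eq_zero hz) Rsqrt2_sq_sub_mul_add_one_eq_zero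
  refine ⟨?_, fun z hz => ?_⟩
  · obtain ⟨z, hz, hz1⟩ := exists_palindromic_quartic_root_norm_le_one 1 4
    simp only [one_mul] at hz
    refine ⟨z, hz, ?_⟩
    rcases hroot hz with h | h
    · exact h
    · nlinarith [mul_le_mul_of_nonneg_left hR (norm_nonneg z)]
  · rcases hroot hz with h | h
    · exact h.ge
    · nlinarith [norm_nonneg z]
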